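/- Let H be a vertex-minimal finite simple graph with θ(H) ≤ 8 and χ'_s(H) > 20. Then H contains no triangle whose three vertices are all 4-vertices each having exactly two 3-neighbors. -/

import Mathlib

open SimpleGraph

variable {V : Type*}

/-- Two edges are at distance at most 2 (they "see" each other): distinct and
some endpoint of one equals or is adjacent to some endpoint of the other. -/
def EdgeSees (G : SimpleGraph V) (e e' : Sym2 V) : Prop :=
  e ≠ e' ∧ ∃ a ∈ e, ∃ b ∈ e', a = b ∨ G.Adj a b

/-- `G` admits a strong `N`-edge-coloring. -/
def HasStrongColoring (G : SimpleGraph V) (N : ℕ) : Prop :=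
  ∃ f : G.edgeSet → Fin N, ∀ e e' : G.edgeSet, EdgeSees G e.val e'.val → f e ≠ f e'

/-- `G − v`: delete the vertex `v` (remove all edges incident to it). -/
def DelV (G : SimpleGraph V) (v : V) : SimpleGraph V where
  Adj a b := G.Adj a b ∧ a ≠ v ∧ b ≠ v
  symm := ⟨fun _ _ h => ⟨h.1.symm, h.2.2, h.2.1⟩⟩
  loopless := ⟨fun a h => G.loopless.irrefl a h.1⟩

/-- 4(C)-vertex: degree 4 with exactly two neighbors of degree 3. -/
def Is4C [Fintype V] (H : SimpleGraph V) [DecidableRel H.Adj] (x : V) : Prop :=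
  H.degree x = 4 ∧ {y | H.Adj x y ∧ H.degree y = 3}.ncard = 2

/-!
Let `abc` be such a triangle. By minimality `H - a` has a strong `20`-edge-colouring; extend it
greedily to the four edges at `a`, where `N(a) = {b, c, x₁, x₂}` with `deg xᵢ = 3`. An edge of
`H - a` seen by `a u` has an endpoint in `N(a) \ {u}` or among the neighbours of `u` in `H - a`.
Hence `a xᵢ` sees at most `3 + 3 + 2 + 5 + 5 = 18` such edges (the two further neighbours of `xᵢ`
have degree at most `5` since `θ(H) ≤ 8`), and `a b`, `a c` see at most `(3 + 2 + 2) + 3·3 = 16`.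
In the order `a x₁, a x₂, a b, a c` at most `18, 19, 18, 19` colours are forbidden, so `H` itself
would have a strong `20`-edge-colouring.
-/

open Finset

def IsProperOn {α : Type*} {N : ℕ} (R : α → α → Prop) (f : α → Fin N) (s : Finset α) :
    Prop :=
  ∀ x ∈ s, ∀ y ∈ s, R x y → f x ≠ f y

namespace IsProperOn

variable {α : Type*} [DecidableEq α] {R : α → α → Prop} [DecidableRel R] {N : ℕ}
  {f : α → Fin N} {s : Finset α}

lemma exists_insert (hR : ∀ x y, R x y → R y x) (hirr : ∀ x, ¬ R x x)
    (hf : IsProperOn R f s) {x : α} (hx : #{y ∈ s | R x y} < N) :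
    ∃ g : α → Fin N, IsProperOn R g (insert x s) := by
  obtain ⟨c, -, hc⟩ := exists_mem_notMem_of_card_lt_card
    (s := {y ∈ s | R x y}.image f) (t := univ) (by simpa using card_image_le.trans_lt hx)
  have hfresh : ∀ y ∈ s, R x y → c ≠ f y := fun y hy hxy h =>
    hc (mem_image.2 ⟨y, mem_filter.2 ⟨hy, hxy⟩, h.symm⟩)
  refine ⟨Function.update f x c, fun y hy z hz hyz => ?_⟩
  rw [mem_insert] at hy hz
  by_cases hyx : y = x <;> by_cases hzx : z = x
  · subst hyx hzx
    exact absurd hyz (hirr _)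
  · subst hyx
    rw [Function.update_self, Function.update_of_ne hzx]
    exact hfresh z (hz.resolve_left hzx) hyz
  · subst hzx
    rw [Function.update_of_ne hyx, Function.update_self]
    exact (hfresh y (hy.resolve_left hyx) (hR _ _ hyz)).symm
  · rw [Function.update_of_ne hyx, Function.update_of_ne hzx]
    exact hf y (hy.resolve_left hyx) z (hz.resolve_left hzx) hyz

lemma exists_union_toFinset (hR : ∀ x y, R x y → R y x) (hirr : ∀ x, ¬ R x x)
    (hf : IsProperOn R f s) (l : List α)
    (hl : ∀ i (hi : i < l.length), #{y ∈ s | R l[i] y} + i < N) :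
    ∃ g : α → Fin N, IsProperOn R g (s ∪ l.toFinset) := by
  induction l generalizing f s with
  | nil => exact ⟨f, by simpa using hf⟩
  | cons x l ih =>
    obtain ⟨g, hg⟩ := hf.exists_insert hR hirr (by simpa using hl 0 (by simp))
    obtain ⟨g', hg'⟩ := ih hg fun i hi => by
      calc #{y ∈ insert x s | R l[i] y} + i ≤ #{y ∈ s | R l[i] y} + 1 + i := by
            gcongr
            rw [filter_insert]
            split_ifs
            exacts [card_insert_le _ _, Nat.le_succ _]
        _ < N := by
          have := hl (i + 1) (by simpa using hi)
          rw [List.getElem_cons_succ] at this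
          omega
    exact ⟨g', by simpa [insert_union, union_insert] using hg'⟩

end IsProperOn

lemma edgeSees_symm {G : SimpleGraph V} (e e' : Sym2 V) (h : EdgeSees G e e') :
    EdgeSees G e' e := by
  obtain ⟨hne, p, hp, q, hq, hpq⟩ := h
  exact ⟨hne.symm, q, hq, p, hp, hpq.imp Eq.symm fun h => h.symm⟩

lemma edgeSees_irrefl {G : SimpleGraph V} (e : Sym2 V) : ¬ EdgeSees G e e := fun h => h.1 rfl

lemma exists_adj_of_mem_edgeSet {G : SimpleGraph V} {e : Sym2 V} {u : V} (he : e ∈ G.edgeSet)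
    (hu : u ∈ e) : ∃ r ∈ e, G.Adj u r :=
  ⟨Sym2.Mem.other hu, Sym2.other_mem hu, by rwa [← Sym2.other_spec hu] at he⟩

section DelV

variable {G : SimpleGraph V} {v : V}

instance [DecidableEq V] [DecidableRel G.Adj] : DecidableRel (DelV G v).Adj :=
  fun a b => inferInstanceAs (Decidable (G.Adj a b ∧ a ≠ v ∧ b ≠ v))

@[simp]
lemma delV_adj {a b : V} : (DelV G v).Adj a b ↔ G.Adj a b ∧ a ≠ v ∧ b ≠ v := Iff.rfl

lemma mem_edgeSet_delV {e : Sym2 V} : e ∈ (DelV G v).edgeSet ↔ e ∈ G.edgeSet ∧ v ∉ e := by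
  induction e using Sym2.ind with
  | _ a b =>
    simp only [mem_edgeSet, delV_adj, Sym2.mem_iff, not_or]
    exact ⟨fun ⟨h, ha, hb⟩ => ⟨h, ha.symm, hb.symm⟩,
      fun ⟨h, ha, hb⟩ => ⟨h, Ne.symm ha, Ne.symm hb⟩⟩

lemma edgeSees_delV {e e' : Sym2 V} (he : e ∈ (DelV G v).edgeSet)
    (he' : e' ∈ (DelV G v).edgeSet) (h : EdgeSees G e e') : EdgeSees (DelV G v) e e' := by
  obtain ⟨hne, p, hp, q, hq, hpq⟩ := h
  refine ⟨hne, p, hp, q, hq, hpq.imp_right fun hadj => ⟨hadj, ?_, ?_⟩⟩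
  · rintro rfl; exact (mem_edgeSet_delV.1 he).2 hp
  · rintro rfl; exact (mem_edgeSet_delV.1 he').2 hq

variable [Fintype V] [DecidableEq V] [DecidableRel G.Adj]

lemma neighborFinset_delV {u : V} (hu : u ≠ v) :
    (DelV G v).neighborFinset u = (G.neighborFinset u).erase v := by
  ext w
  simp only [mem_neighborFinset, delV_adj, mem_erase]
  exact ⟨fun ⟨h, _, hw⟩ => ⟨hw, h⟩, fun ⟨hw, h⟩ => ⟨h, hu, hw⟩⟩

lemma degree_delV_le (u : V) : (DelV G v).degree u ≤ G.degree u :=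
  card_le_card fun w => by simp only [mem_neighborFinset, delV_adj]; exact And.left

lemma degree_delV_of_adj {u : V} (h : G.Adj v u) : (DelV G v).degree u = G.degree u - 1 := by
  rw [← card_neighborFinset_eq_degree, neighborFinset_delV h.ne', card_erase_of_mem
    (by rwa [mem_neighborFinset, adj_comm]), card_neighborFinset_eq_degree]

end DelV

section StrongColoring

lemma hasStrongColoring_of_isProperOn {G : SimpleGraph V} {N : ℕ} {f : Sym2 V → Fin N}
    {s : Finset (Sym2 V)} (hf : IsProperOn (EdgeSees G) f s) (hs : ∀ e ∈ G.edgeSet, e ∈ s) :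
    HasStrongColoring G N :=
  ⟨fun e => f e, fun e e' h => hf _ (hs _ e.2) _ (hs _ e'.2) h⟩

variable [Fintype V] [DecidableEq V] {G : SimpleGraph V} [DecidableRel G.Adj] {N : ℕ}

lemma card_filter_exists_mem_le_sum_degree (l : List V) :
    #{e ∈ G.edgeFinset | ∃ q ∈ l, q ∈ e} ≤ (l.map fun q => G.degree q).sum := by
  induction l with
  | nil => simp
  | cons x l ih =>
    calc #{e ∈ G.edgeFinset | ∃ q ∈ x :: l, q ∈ e}
        ≤ #(G.incidenceFinset x ∪ {e ∈ G.edgeFinset | ∃ q ∈ l, q ∈ e}) := by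
          refine card_le_card fun e he => ?_
          simp only [mem_filter, List.mem_cons, exists_eq_or_imp] at he
          rcases he with ⟨he, hx | hl⟩
          · exact mem_union_left _ ((mem_incidenceFinset _ _ _).2 ⟨mem_edgeFinset.1 he, hx⟩)
          · exact mem_union_right _ (mem_filter.2 ⟨he, hl⟩)
      _ ≤ G.degree x + (l.map fun q => G.degree q).sum := by
          rw [← card_incidenceFinset_eq_degree]
          exact (card_union_le _ _).trans (by gcongr)
      _ = ((x :: l).map fun q => G.degree q).sum := by simp

lemma HasStrongColoring.exists_isProperOn_delV [NeZero N] {v : V}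
    (h : HasStrongColoring (DelV G v) N) :
    ∃ f : Sym2 V → Fin N, IsProperOn (EdgeSees G) f (DelV G v).edgeFinset := by
  obtain ⟨f, hf⟩ := h
  refine ⟨fun e => if he : e ∈ (DelV G v).edgeSet then f ⟨e, he⟩ else 0, fun e he e' he' h => ?_⟩
  rw [mem_edgeFinset] at he he'
  simpa only [dif_pos he, dif_pos he'] using hf ⟨e, he⟩ ⟨e', he'⟩ (edgeSees_delV he he' h)

lemma HasStrongColoring.of_delV [DecidableRel (EdgeSees G)] [NeZero N] {v : V}
    (h : HasStrongColoring (DelV G v) N) (l : List (Sym2 V)) (hl : ∀ r, G.Adj v r → s(v, r) ∈ l)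
    (hcard : ∀ i (hi : i < l.length), #{e ∈ (DelV G v).edgeFinset | EdgeSees G l[i] e} + i < N) :
    HasStrongColoring G N := by
  obtain ⟨f, hf⟩ := h.exists_isProperOn_delV
  obtain ⟨g, hg⟩ := hf.exists_union_toFinset edgeSees_symm edgeSees_irrefl l hcard
  refine hasStrongColoring_of_isProperOn hg fun e he => ?_
  by_cases hv : v ∈ e
  · rw [← Sym2.other_spec hv] at he ⊢
    exact mem_union_right _ (List.mem_toFinset.2 (hl _ he))
  · exact mem_union_left _ (mem_edgeFinset.2 (mem_edgeSet_delV.2 ⟨he, hv⟩))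

end StrongColoring

section Triangle

variable {H : SimpleGraph V}

lemma exists_mem_of_edgeSees_delV {a u : V} {e : Sym2 V} (hau : H.Adj a u)
    (he : e ∈ (DelV H a).edgeSet) (hs : EdgeSees H s(a, u) e) :
    ∃ q ∈ e, (H.Adj a q ∧ q ≠ u) ∨ (DelV H a).Adj u q := by
  have ha : a ∉ e := (mem_edgeSet_delV.1 he).2
  have of_mem : u ∈ e → ∃ q ∈ e, (H.Adj a q ∧ q ≠ u) ∨ (DelV H a).Adj u q := fun hu =>
    let ⟨r, hr, hur⟩ := exists_adj_of_mem_edgeSet he hu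
    ⟨r, hr, Or.inr hur⟩
  obtain ⟨-, p, hp, q, hq, hpq⟩ := hs
  have hqa : q ≠ a := by rintro rfl; exact ha hq
  rcases Sym2.mem_iff.1 hp with rfl | rfl
  · rcases hpq with rfl | hpq
    · exact absurd hq ha
    · rcases eq_or_ne q u with rfl | hqu
      · exact of_mem hq
      · exact ⟨q, hq, Or.inl ⟨hpq, hqu⟩⟩
  · rcases hpq with rfl | hpq
    · exact of_mem hq
    · exact ⟨q, hq, Or.inr ⟨hpq, hau.ne', hqa⟩⟩

variable [Fintype V] [DecidableEq V] [DecidableRel H.Adj]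

lemma card_filter_edgeSees_delV_le [DecidableRel (EdgeSees H)] {a u : V} (hau : H.Adj a u)
    (l : List V) (hl : ∀ q, H.Adj a q → q ≠ u → q ∈ l) (hl' : ∀ q, (DelV H a).Adj u q → q ∈ l) :
    #{e ∈ (DelV H a).edgeFinset | EdgeSees H s(a, u) e} ≤
      (l.map fun q => (DelV H a).degree q).sum := by
  refine le_trans (card_le_card fun e he => ?_) (card_filter_exists_mem_le_sum_degree l)
  rw [mem_filter] at he ⊢
  obtain ⟨q, hq, h | h⟩ := exists_mem_of_edgeSees_delV hau (mem_edgeFinset.1 he.1) he.2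
  exacts [⟨he.1, q, hl q h.1 h.2, hq⟩, ⟨he.1, q, hl' q h, hq⟩]

lemma Is4C.neighborFinset_eq {u v₁ v₂ : V} (h : Is4C H u) (h₁ : H.Adj u v₁) (h₂ : H.Adj u v₂)
    (hne : v₁ ≠ v₂) (hd₁ : H.degree v₁ ≠ 3) (hd₂ : H.degree v₂ ≠ 3) :
    ∃ z₁ z₂, H.degree z₁ = 3 ∧ H.degree z₂ = 3 ∧ H.neighborFinset u = {v₁, v₂, z₁, z₂} := by
  obtain ⟨z₁, z₂, hz, hS⟩ := Set.ncard_eq_two.1 h.2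
  have hz₁ : H.Adj u z₁ ∧ H.degree z₁ = 3 := (Set.ext_iff.1 hS z₁).2 (by simp)
  have hz₂ : H.Adj u z₂ ∧ H.degree z₂ = 3 := (Set.ext_iff.1 hS z₂).2 (by simp)
  have h₁₁ : v₁ ≠ z₁ := fun h => hd₁ (h ▸ hz₁.2)
  have h₁₂ : v₁ ≠ z₂ := fun h => hd₁ (h ▸ hz₂.2)
  have h₂₁ : v₂ ≠ z₁ := fun h => hd₂ (h ▸ hz₁.2)
  have h₂₂ : v₂ ≠ z₂ := fun h => hd₂ (h ▸ hz₂.2)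
  refine ⟨z₁, z₂, hz₁.2, hz₂.2, (eq_of_subset_of_card_le (fun w hw => ?_) ?_).symm⟩
  · simp only [mem_insert, mem_singleton] at hw
    rw [mem_neighborFinset]
    rcases hw with rfl | rfl | rfl | rfl
    exacts [h₁, h₂, hz₁.1, hz₂.1]
  · rw [card_neighborFinset_eq_degree, h.1, card_insert_of_notMem (by simp [*]),
      card_insert_of_notMem (by simp [*]), card_pair hz]

lemma card_filter_edgeSees_delV_le_eighteen [DecidableRel (EdgeSees H)]
    (hore : ∀ u w, H.Adj u w → H.degree u + H.degree w ≤ 8) {a b c x x' : V}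
    (haN : H.neighborFinset a = {b, c, x, x'}) (hb : H.degree b ≤ 4) (hc : H.degree c ≤ 4)
    (hx : H.degree x = 3) (hx' : H.degree x' ≤ 3) :
    #{e ∈ (DelV H a).edgeFinset | EdgeSees H s(a, x) e} ≤ 18 := by
  have hadj : ∀ q, H.Adj a q ↔ q = b ∨ q = c ∨ q = x ∨ q = x' := fun q => by
    rw [← mem_neighborFinset, haN]; simp
  have hax : H.Adj a x := (hadj x).2 (by simp)
  obtain ⟨w₁, w₂, -, hxN⟩ := card_eq_two.1 (show #((DelV H a).neighborFinset x) = 2 by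
    rw [card_neighborFinset_eq_degree, degree_delV_of_adj hax, hx])
  have hw : ∀ w, (DelV H a).Adj x w ↔ w = w₁ ∨ w = w₂ := fun w => by
    rw [← mem_neighborFinset, hxN]; simp
  have hw_deg : ∀ w, (DelV H a).Adj x w → (DelV H a).degree w ≤ 5 := fun w h =>
    (degree_delV_le w).trans (by have := hore x w h.1; omega)
  have hw₁ := hw_deg w₁ ((hw w₁).2 (by simp))
  have hw₂ := hw_deg w₂ ((hw w₂).2 (by simp))
  calc #{e ∈ (DelV H a).edgeFinset | EdgeSees H s(a, x) e}
      ≤ ([b, c, x', w₁, w₂].map fun q => (DelV H a).degree q).sum :=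
        card_filter_edgeSees_delV_le hax _
          (fun q hq hqx => by rcases (hadj q).1 hq with rfl | rfl | rfl | rfl <;> simp_all)
          (fun q hq => by rcases (hw q).1 hq with rfl | rfl <;> simp)
    _ ≤ 18 := by
      have hdeg q (hq : q = b ∨ q = c ∨ q = x ∨ q = x') := degree_delV_of_adj ((hadj q).2 hq)
      simp only [List.map_cons, List.map_nil, List.sum_cons, List.sum_nil,
        hdeg b (by simp), hdeg c (by simp), hdeg x' (by simp)]
      omega

lemma card_filter_edgeSees_delV_le_sixteen [DecidableRel (EdgeSees H)] {a b c x₁ x₂ y₁ y₂ : V}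
    (haN : H.neighborFinset a = {b, c, x₁, x₂}) (hbN : H.neighborFinset b = {a, c, y₁, y₂})
    (hc : H.degree c ≤ 4) (hx₁ : H.degree x₁ ≤ 3) (hx₂ : H.degree x₂ ≤ 3)
    (hy₁ : H.degree y₁ ≤ 3) (hy₂ : H.degree y₂ ≤ 3) :
    #{e ∈ (DelV H a).edgeFinset | EdgeSees H s(a, b) e} ≤ 16 := by
  have hadj : ∀ q, H.Adj a q ↔ q = b ∨ q = c ∨ q = x₁ ∨ q = x₂ := fun q => by
    rw [← mem_neighborFinset, haN]; simp
  have hbadj : ∀ q, H.Adj b q ↔ q = a ∨ q = c ∨ q = y₁ ∨ q = y₂ := fun q => by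
    rw [← mem_neighborFinset, hbN]; simp
  calc #{e ∈ (DelV H a).edgeFinset | EdgeSees H s(a, b) e}
      ≤ ([c, x₁, x₂, c, y₁, y₂].map fun q => (DelV H a).degree q).sum :=
        card_filter_edgeSees_delV_le ((hadj b).2 (by simp)) _
          (fun q hq hqb => by rcases (hadj q).1 hq with rfl | rfl | rfl | rfl <;> simp_all)
          (fun q hq => by rcases (hbadj q).1 hq.1 with rfl | rfl | rfl | rfl <;> simp_all)
    _ ≤ 16 := by
      have := degree_delV_le (G := H) (v := a) y₁
      have := degree_delV_le (G := H) (v := a) y₂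
      have hdeg q (hq : q = b ∨ q = c ∨ q = x₁ ∨ q = x₂) := degree_delV_of_adj ((hadj q).2 hq)
      simp only [List.map_cons, List.map_nil, List.sum_cons, List.sum_nil,
        hdeg c (by simp), hdeg x₁ (by simp), hdeg x₂ (by simp)]
      omega

end Triangle

/-- θ ≤ 8, χ'ₛ > 20: no triangle of three 4(C)-vertices. -/
theorem stmt15 [Fintype V] (H : SimpleGraph V) [DecidableRel H.Adj]
    (hore : ∀ u w, H.Adj u w → H.degree u + H.degree w ≤ 8)
    (hnc : ¬ HasStrongColoring H 20)
    (hmin : ∀ v, HasStrongColoring (DelV H v) 20) :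
    ¬ ∃ a b c : V, H.Adj a b ∧ H.Adj b c ∧ H.Adj a c ∧
      Is4C H a ∧ Is4C H b ∧ Is4C H c := by
  classical
  rintro ⟨a, b, c, hab, hbc, hac, ha, hb, hc⟩
  obtain ⟨x₁, x₂, hx₁, hx₂, haN⟩ :=
    ha.neighborFinset_eq hab hac hbc.ne (by simp [hb.1]) (by simp [hc.1])
  obtain ⟨y₁, y₂, hy₁, hy₂, hbN⟩ :=
    hb.neighborFinset_eq hab.symm hbc hac.ne (by simp [ha.1]) (by simp [hc.1])
  obtain ⟨w₁, w₂, hw₁, hw₂, hcN⟩ :=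
    hc.neighborFinset_eq hac.symm hbc.symm hab.ne (by simp [ha.1]) (by simp [hb.1])
  have hax₁ := card_filter_edgeSees_delV_le_eighteen hore haN hb.1.le hc.1.le hx₁ hx₂.le
  have hax₂ := card_filter_edgeSees_delV_le_eighteen hore (by rw [haN, pair_comm x₁ x₂])
    hb.1.le hc.1.le hx₂ hx₁.le
  have hab' := card_filter_edgeSees_delV_le_sixteen haN hbN hc.1.le hx₁.le hx₂.le hy₁.le hy₂.le
  have hac' := card_filter_edgeSees_delV_le_sixteen (by rw [haN, insert_comm b c]) hcN
    hb.1.le hx₁.le hx₂.le hw₁.le hw₂.le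
  refine hnc ((hmin a).of_delV [s(a, x₁), s(a, x₂), s(a, b), s(a, c)] (fun r hr => ?_)
    fun i hi => ?_)
  · rw [← mem_neighborFinset, haN] at hr
    simp only [mem_insert, mem_singleton] at hr
    rcases hr with rfl | rfl | rfl | rfl <;> simp
  · simp only [List.length_cons, List.length_nil] at hi
    interval_cases i <;> simp <;> omega
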